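/- arXiv:2507.06843 — 3 statements merged into one kernel-verified Lean document; each statement's English description precedes it below -/
import Mathlib

section
/- A topological space X is T_{1/2} (every g-closed set is closed) if and only if for each x ∈ X, the singleton {x} is open or closed. -/
def GClosed {X : Type*} [TopologicalSpace X] (A : Set X) : Prop :=
  ∀ U : Set X, IsOpen U → A ⊆ U → closure A ⊆ U

theorem T_half_iff_singletons {X : Type*} [TopologicalSpace X] :
    (∀ A : Set X, GClosed A → IsClosed A) ↔
      ∀ x : X, IsOpen ({x} : Set X) ∨ IsClosed ({x} : Set X) := by
  constructor
  · intro h x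
    by_cases hc : IsClosed ({x} : Set X)
    · exact Or.inr hc
    · left
      rw [← isClosed_compl_iff]
      apply h
      intro U hU hsub z hz
      by_cases hxU : x ∈ U
      · have : U = Set.univ := by
          apply Set.eq_univ_of_forall
          intro y
          by_cases hy : y = x
          · exact hy ▸ hxU
          · exact hsub hy
        simp [this]
      · have hUeq : U = ({x} : Set X)ᶜ := by
          apply Set.Subset.antisymm
          · intro y hy hyx
            exact hxU (hyx ▸ hy)
          · exact hsub
        exact absurd (hUeq ▸ hU) (by rwa [isOpen_compl_iff])
  · intro h A hA
    have : closure A ⊆ A := by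
      intro x hx
      rcases h x with ho | hc
      · rcases mem_closure_iff.mp hx _ ho rfl with ⟨y, hy, hyA⟩
        exact hy ▸ hyA
      · by_contra hxA
        have : A ⊆ ({x} : Set X)ᶜ := fun y hy hyx => hxA (hyx ▸ hy)
        have := hA _ hc.isOpen_compl this hx
        exact this rfl
    exact closure_subset_iff_isClosed.mp this
end

section
/- For each point x of a topological space X, either the singleton {x} is closed or its complement X \ {x} is g-closed. -/
theorem singleton_closed_or_compl_gclosed {X : Type*} [TopologicalSpace X] (x : X) :
    IsClosed ({x} : Set X) ∨ GClosed (({x} : Set X)ᶜ) := by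
  by_cases h : IsClosed ({x} : Set X)
  · exact Or.inl h
  · refine Or.inr fun U hU hsub => ?_
    by_cases hx : x ∈ U
    · have : U = Set.univ := by
        apply Set.eq_univ_of_forall
        intro y
        by_cases hy : y = x
        · exact hy ▸ hx
        · exact hsub (by simpa using hy)
      simp [this]
    · have hUeq : U = ({x} : Set X)ᶜ := by
        apply Set.Subset.antisymm
        · intro y hy hyx
          exact hx (hyx ▸ hy)
        · exact hsub
      have : IsOpen (({x} : Set X)ᶜ) := hUeq ▸ hU
      exact absurd (by simpa using this.isClosed_compl) h
end

section
/- If X is T_{1/2} (every g-closed set is closed) and x ∈ X is such that {x} is not closed, then {x} is open and moreover X \ {x} is g-closed. -/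
theorem T_half_not_closed_open {X : Type*} [TopologicalSpace X]
    (hT : ∀ A : Set X, GClosed A → IsClosed A)
    (x : X) (hx : ¬ IsClosed ({x} : Set X)) :
    IsOpen ({x} : Set X) ∧ GClosed (({x} : Set X)ᶜ) := by
  have hg : GClosed (({x} : Set X)ᶜ) := by
    intro U hU hsub
    by_cases hxU : x ∈ U
    · have : U = Set.univ := by
        apply Set.eq_univ_of_forall
        intro y
        by_cases hy : y = x
        · subst hy; exact hxU
        · exact hsub hy
      simp [this]
    · exfalso
      apply hx
      have : U = ({x} : Set X)ᶜ := by
        apply Set.Subset.antisymm _ hsub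
        intro y hy hy'
        exact hxU (hy' ▸ hy)
      rw [← compl_compl ({x} : Set X)]; exact isClosed_compl_iff.mpr (this ▸ hU)
  refine ⟨?_, hg⟩
  have := hT _ hg
  simpa using this.isOpen_compl
end
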